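/- Let w, n ≥ 1 be integers and define Δ_{s} = -(u₁u₂)^{-s}Σ_{i=0}^{s-1}u₁^{i}u₂^{s-1-i} for 1 ≤ s ≤ n-1, Δ_0 = 0, F_w = Σ_{i=0}^{w-1}(u₁u₂)^i, F_{-1} = -(u₁u₂)^{-1}. Then Δ_n := ((u₁-1)(u₂-1)F_w + 1)·Δ_{n-1} + (u₁u₂)^{-1}·(F_w/F_{-1})·(Δ_{n-1} - Δ_{n-2}) equals Σ_{0≤i≤w-1, 0≤j≤n-1} u₁^{i+j+1-n} u₂^{i-j} − Σ_{0≤i≤w, 0≤j≤n-2} u₁^{i+j+1-n} u₂^{i-j-1}. -/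

import Mathlib

open Finset

noncomputable section

/-- Laurent polynomials in two variables `u₁, u₂` over `ℤ`. -/
abbrev L2 := AddMonoidAlgebra ℤ (ℤ × ℤ)

/-- The monomial `u₁^r * u₂^s`. -/
def mono (r s : ℤ) : L2 := AddMonoidAlgebra.single (r, s) 1

/-- The `i`-th diagonal part `P^[i]`: the sum of all monomials `a·u₁^r·u₂^s` of `P`
with `r - s = i`. -/
def diag (P : L2) (i : ℤ) : L2 :=
  AddMonoidAlgebra.ofCoeff (Finsupp.filter (fun p : ℤ × ℤ => p.1 - p.2 = i) P.coeff)

/-- `F r = Σ_{i=0}^{r-1} (u₁u₂)^i` for `r > 0`, `F 0 = 0`,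
`F r = -Σ_{i=r}^{-1} (u₁u₂)^i` for `r < 0`. -/
def F (r : ℤ) : L2 :=
  if 0 < r then ∑ i ∈ range r.toNat, mono i i
  else -∑ i ∈ range (-r).toNat, mono (-(i : ℤ) - 1) (-(i : ℤ) - 1)

/-- The closed form `Δ_s = -(u₁u₂)^{-s} Σ_{i=0}^{s-1} u₁^i u₂^{s-1-i}` (with `Δ_0 = 0`). -/
def Dl (s : ℕ) : L2 :=
  -(mono (-(s : ℤ)) (-(s : ℤ))) * ∑ i ∈ range s, mono i ((s : ℤ) - 1 - i)

/-!
Everything factors through two geometric series, `F_w = Σ_{i<w} (u₁u₂)^i` and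
`G_k = Σ_{j<k} (u₁u₂⁻¹)^j`: `Δ_s = -u₁^{-s}u₂⁻¹·G_s`, and the two double sums are
`u₁^{1-n}·F_w·G_n` and `u₁^{1-n}u₂⁻¹·F_{w+1}·G_{n-1}`. The identity is then plain ring algebra
using only `F_w·(u₁u₂ - 1) = (u₁u₂)^w - 1`, `F_{w+1} = F_w + (u₁u₂)^w` and
`G_{k+1} = G_k + (u₁u₂⁻¹)^k`.
-/

lemma mono_mul (a b c d : ℤ) : mono a b * mono c d = mono (a + c) (b + d) := by
  simp [mono, AddMonoidAlgebra.single_mul_single, Prod.mk_add_mk]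

lemma mono_mul_eq {a b c d r s : ℤ} (hr : a + c = r) (hs : b + d = s) :
    mono a b * mono c d = mono r s := by
  rw [mono_mul, hr, hs]

lemma mono_pow (r s : ℤ) (k : ℕ) : mono r s ^ k = mono (k * r) (k * s) := by
  simp [mono, AddMonoidAlgebra.single_pow]

lemma F_natCast_eq_geom_sum (w : ℕ) : F w = ∑ i ∈ range w, mono 1 1 ^ i := by
  rcases Nat.eq_zero_or_pos w with rfl | hw
  · simp [F]
  · simp [F, hw, mono_pow]

lemma Dl_eq_geom_sum (s : ℕ) : Dl s = -(mono (-s) (-1) * ∑ j ∈ range s, mono 1 (-1) ^ j) := by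
  rw [Dl, neg_mul, mul_sum, mul_sum]
  refine congrArg _ (sum_congr rfl fun j _ => ?_)
  rw [mono_pow, mono_mul, mono_mul]
  exact congrArg₂ mono (by ring) (by ring)

lemma sum_sum_mono_eq_mul_geom_sum (a b : ℕ) (r s : ℤ) :
    ∑ i ∈ range a, ∑ j ∈ range b, mono (i + j + r) (i - j + s) =
      mono r s * (∑ i ∈ range a, mono 1 1 ^ i) * ∑ j ∈ range b, mono 1 (-1) ^ j := by
  rw [mul_assoc, sum_mul_sum, mul_sum]
  refine sum_congr rfl fun i _ => ?_
  rw [mul_sum]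
  refine sum_congr rfl fun j _ => ?_
  rw [mono_pow, mono_pow, mono_mul, mono_mul]
  exact congrArg₂ mono (by ring) (by ring)

/-- Read `x, y, q, z, u, c` as `u₁, u₂, u₁u₂, (u₁u₂)⁻¹, u₁u₂⁻¹, u₁^{-(m+1)}u₂⁻¹`. -/
theorem delta_recursion_geom_sum {R : Type*} [CommRing R] {x y q z u c : R} (w m : ℕ)
    (hq : x * y = q) (hz : q * z = 1) (hu : y * u = x) :
    ((x - 1) * (y - 1) * ∑ i ∈ range w, q ^ i + 1) * -(c * ∑ j ∈ range (m + 1), u ^ j)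
      + z * (-q * ∑ i ∈ range w, q ^ i) *
        (-(c * ∑ j ∈ range (m + 1), u ^ j) - -(x * c * ∑ j ∈ range m, u ^ j)) =
      y * c * (∑ i ∈ range w, q ^ i) * ∑ j ∈ range (m + 2), u ^ j
        - c * (∑ i ∈ range (w + 1), q ^ i) * ∑ j ∈ range (m + 1), u ^ j := by
  have hT := geom_sum_mul q w
  rw [sum_range_succ _ (m + 1), sum_range_succ _ m, sum_range_succ _ w]
  set T := ∑ i ∈ range w, q ^ i
  set g := ∑ j ∈ range m, u ^ j
  linear_combination (T * c * (g + u ^ m) - x * T * c * g) * hz - T * c * u ^ m * hu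
    - c * (g + u ^ m) * hT - c * (g + u ^ m) * T * hq

/-- `F_{-1} = -(u₁u₂)⁻¹` is a unit, so `F_w/F_{-1}` is encoded as `-(u₁u₂)·F_w`. -/
theorem Delta_n_closed_form_general (w n : ℕ) (hn : 2 ≤ n) :
    ((mono 1 0 - 1) * (mono 0 1 - 1) * F (w : ℤ) + 1) * Dl (n - 1)
        + mono (-1) (-1) * (-(mono 1 1) * F (w : ℤ)) * (Dl (n - 1) - Dl (n - 2)) =
      (∑ i ∈ range w, ∑ j ∈ range n, mono ((i : ℤ) + j + 1 - n) ((i : ℤ) - j))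
        - ∑ i ∈ range (w + 1), ∑ j ∈ range (n - 1),
            mono ((i : ℤ) + j + 1 - n) ((i : ℤ) - j - 1) := by
  obtain ⟨m, rfl⟩ : ∃ m, n = m + 2 := ⟨n - 2, by omega⟩
  set c := mono (-(m + 1)) (-1)
  have hxc : mono 1 0 * c = mono (-m) (-1) := mono_mul_eq (by ring) (by ring)
  have hyc : mono 0 1 * c = mono (-(m + 1)) 0 := mono_mul_eq (by ring) (by ring)
  have hD : Dl (m + 1) = -(c * ∑ j ∈ range (m + 1), mono 1 (-1) ^ j) := by
    rw [Dl_eq_geom_sum]; push_cast; rfl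
  have hD' : Dl m = -(mono 1 0 * c * ∑ j ∈ range m, mono 1 (-1) ^ j) := by
    rw [Dl_eq_geom_sum, hxc]
  have hS : ∑ i ∈ range w, ∑ j ∈ range (m + 2),
        mono ((i : ℤ) + j + 1 - ↑(m + 2)) ((i : ℤ) - j) =
      mono 0 1 * c * (∑ i ∈ range w, mono 1 1 ^ i) * ∑ j ∈ range (m + 2), mono 1 (-1) ^ j := by
    rw [hyc, ← sum_sum_mono_eq_mul_geom_sum]
    exact sum_congr rfl fun i _ => sum_congr rfl fun j _ =>
      congrArg₂ mono (by push_cast; ring) (by ring)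
  have hS' : ∑ i ∈ range (w + 1), ∑ j ∈ range (m + 1),
        mono ((i : ℤ) + j + 1 - ↑(m + 2)) ((i : ℤ) - j - 1) =
      c * (∑ i ∈ range (w + 1), mono 1 1 ^ i) * ∑ j ∈ range (m + 1), mono 1 (-1) ^ j := by
    rw [← sum_sum_mono_eq_mul_geom_sum]
    exact sum_congr rfl fun i _ => sum_congr rfl fun j _ =>
      congrArg₂ mono (by push_cast; ring) (by ring)
  rw [show m + 2 - 1 = m + 1 from rfl, show m + 2 - 2 = m from rfl, F_natCast_eq_geom_sum,
    hD, hD', hS, hS']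
  exact delta_recursion_geom_sum w m (mono_mul_eq (by ring) (by ring))
    (mono_mul_eq (by ring) (by ring)) (mono_mul_eq (by ring) (by ring))

/-- `Δ_n := ((u₁-1)(u₂-1)F_w + 1)·Δ_{n-1} + (u₁u₂)^{-1}·(F_w/F_{-1})·(Δ_{n-1} - Δ_{n-2})`
equals `Σ_{0≤i≤w-1, 0≤j≤n-1} u₁^{i+j+1-n} u₂^{i-j} − Σ_{0≤i≤w, 0≤j≤n-2} u₁^{i+j+1-n} u₂^{i-j-1}`,
where `F_{-1} = -(u₁u₂)^{-1}` is a unit so that `F_w/F_{-1} = -(u₁u₂)·F_w`. -/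
theorem Delta_n_closed_form (w n : ℕ) (hw : 1 ≤ w) (hn : 2 ≤ n) :
    ((mono 1 0 - 1) * (mono 0 1 - 1) * F (w : ℤ) + 1) * Dl (n - 1)
        + mono (-1) (-1) * (-(mono 1 1) * F (w : ℤ)) * (Dl (n - 1) - Dl (n - 2)) =
      (∑ i ∈ range w, ∑ j ∈ range n, mono ((i : ℤ) + j + 1 - n) ((i : ℤ) - j))
        - ∑ i ∈ range (w + 1), ∑ j ∈ range (n - 1),
            mono ((i : ℤ) + j + 1 - n) ((i : ℤ) - j - 1) :=
  Delta_n_closed_form_general w n hn
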